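/- Along the closed-loop dynamics ẇ = (J_cl − R_cl)∇H_cl(w) − (G_d d̄_a, 0, G_d d̄_a) with J_c1 − R_c1 = G_d, the Lyapunov candidate W(w) = H_cl(w) − d̄_a^T(w_c − w̄_c) − H_cl(w̄) satisfies Ẇ(w) ≤ −‖∇_{w_a}H_cl(w)‖²_{R_c2} − ‖∇_{w_a}H_cl(w) + K(w_c − w̄_c)‖²_{R_c1}, where w̄_c = K^{-1} d̄_a. -/

import Mathlib

/-!
Write `x = (a, b, K w_c - d̄_a)` for `∇W`. Then `∇H_cl = x + (0, 0, d̄_a)`, and since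
`J_c1 - R_c1 = G_d` the matrix `J_cl - R_cl` maps `(0, 0, d̄_a)` exactly to the disturbance
term `(G_d d̄_a, 0, G_d d̄_a)`, so `Ẇ = xᵀ (J_cl - R_cl) x`. As `J_cl` is skew this is
`-xᵀ R_cl x`, and expanding `R_cl` gives `‖a‖²_{R_c2} + ‖a + K w_c - d̄_a‖²_{R_c1} + ‖b‖²_{R_uu}`,
where `K w_c - d̄_a = K (w_c - w̄_c)`.
-/

open Matrix

def blockVec {m s : ℕ} (a : Fin m → ℝ) (b : Fin s → ℝ) (c : Fin m → ℝ) :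
    (Fin m ⊕ (Fin s ⊕ Fin m)) → ℝ := Sum.elim a (Sum.elim b c)

noncomputable def Jcl {m s : ℕ} (Jc1 : Matrix (Fin m) (Fin m) ℝ)
    (Juu : Matrix (Fin s) (Fin s) ℝ) (Jau Rau : Matrix (Fin m) (Fin s) ℝ) :
    Matrix (Fin m ⊕ (Fin s ⊕ Fin m)) (Fin m ⊕ (Fin s ⊕ Fin m)) ℝ :=
  fromBlocks Jc1 (fromCols (Jau + Rau) Jc1)
    (fromRows (-(Jau + Rau)ᵀ) Jc1) (fromBlocks Juu 0 0 Jc1)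

noncomputable def Rcl {m s : ℕ} (Rc1 Rc2 : Matrix (Fin m) (Fin m) ℝ)
    (Ruu : Matrix (Fin s) (Fin s) ℝ) :
    Matrix (Fin m ⊕ (Fin s ⊕ Fin m)) (Fin m ⊕ (Fin s ⊕ Fin m)) ℝ :=
  fromBlocks (Rc1 + Rc2) (fromCols 0 Rc1) (fromRows 0 Rc1) (fromBlocks Ruu 0 0 Rc1)

theorem dotProduct_mulVec_self_eq_zero_of_transpose_eq_neg {n R : Type*} [Fintype n]
    [CommRing R] [IsAddTorsionFree R] {A : Matrix n n R} (hA : Aᵀ = -A) (x : n → R) :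
    x ⬝ᵥ A *ᵥ x = 0 :=
  self_eq_neg.mp <| calc
    x ⬝ᵥ A *ᵥ x = Aᵀ *ᵥ x ⬝ᵥ x := by rw [dotProduct_mulVec, mulVec_transpose]
    _ = -(x ⬝ᵥ A *ᵥ x) := by rw [hA, neg_mulVec, neg_dotProduct, dotProduct_comm]

section ClosedLoop

variable {m s : ℕ} {Jc1 Rc1 Rc2 : Matrix (Fin m) (Fin m) ℝ} {Juu Ruu : Matrix (Fin s) (Fin s) ℝ}
  {Jau Rau : Matrix (Fin m) (Fin s) ℝ}

theorem blockVec_add (a a' : Fin m → ℝ) (b b' : Fin s → ℝ) (c c' : Fin m → ℝ) :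
    blockVec a b c + blockVec a' b' c' = blockVec (a + a') (b + b') (c + c') := by
  simp only [blockVec, Sum.elim_add_add]

theorem Jcl_transpose (hJc1 : Jc1ᵀ = -Jc1) (hJuu : Juuᵀ = -Juu) :
    (Jcl Jc1 Juu Jau Rau)ᵀ = -Jcl Jc1 Juu Jau Rau := by
  simp [Jcl, fromBlocks_transpose, transpose_fromCols, transpose_fromRows, fromBlocks_neg,
    fromRows_neg, fromCols_neg, hJc1, hJuu]

theorem Jcl_sub_Rcl_mulVec_blockVec_zero_zero (d : Fin m → ℝ) :
    (Jcl Jc1 Juu Jau Rau - Rcl Rc1 Rc2 Ruu) *ᵥ blockVec 0 0 d =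
      blockVec ((Jc1 - Rc1) *ᵥ d) 0 ((Jc1 - Rc1) *ᵥ d) := by
  simp [Jcl, Rcl, blockVec, sub_mulVec, fromBlocks_mulVec, ← Sum.elim_sub_sub]

theorem blockVec_dotProduct_Rcl_mulVec (a : Fin m → ℝ) (b : Fin s → ℝ) (e : Fin m → ℝ) :
    blockVec a b e ⬝ᵥ Rcl Rc1 Rc2 Ruu *ᵥ blockVec a b e =
      a ⬝ᵥ Rc2 *ᵥ a + (a + e) ⬝ᵥ Rc1 *ᵥ (a + e) + b ⬝ᵥ Ruu *ᵥ b := by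
  simp only [Rcl, blockVec, fromBlocks_mulVec, fromCols_mulVec_sumElim, fromRows_mulVec,
    sumElim_dotProduct_sumElim, add_mulVec, mulVec_add, Sum.elim_comp_inl, Sum.elim_comp_inr, dotProduct_add,
    add_dotProduct, zero_mulVec, dotProduct_zero, add_zero]
  ring

end ClosedLoop

/-- Here `a`, `b` and `K w_c` are the three blocks of `∇H_cl(w)`, the first argument of the
dot product is `∇W(w)`, and `w̄_c = K⁻¹ d̄_a`. -/
theorem stmt9_general {m s : ℕ} (Jc1 Rc1 Rc2 K : Matrix (Fin m) (Fin m) ℝ)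
    (Juu Ruu : Matrix (Fin s) (Fin s) ℝ) (Jau Rau : Matrix (Fin m) (Fin s) ℝ)
    (hJc1 : Jc1ᵀ = -Jc1) (hJuu : Juuᵀ = -Juu) (hRuu : Ruu.PosSemidef) (hK : K.PosDef)
    (Gd : Matrix (Fin m) (Fin m) ℝ) (hGd : Gd = Jc1 - Rc1) (da : Fin m → ℝ) :
    ∀ (a : Fin m → ℝ) (b : Fin s → ℝ) (wc : Fin m → ℝ),
      blockVec a b (K.mulVec wc - da) ⬝ᵥ
        ((Jcl Jc1 Juu Jau Rau - Rcl Rc1 Rc2 Ruu).mulVec (blockVec a b (K.mulVec wc))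
          - blockVec (Gd.mulVec da) 0 (Gd.mulVec da)) ≤
      -(a ⬝ᵥ Rc2.mulVec a)
        - ((a + K.mulVec (wc - K⁻¹.mulVec da)) ⬝ᵥ
            Rc1.mulVec (a + K.mulVec (wc - K⁻¹.mulVec da))) := by
  intro a b wc
  have hKinv : K *ᵥ (K⁻¹ *ᵥ da) = da := by
    rw [mulVec_mulVec, mul_nonsing_inv _ (isUnit_iff_ne_zero.mpr hK.det_pos.ne'), one_mulVec]
  have hsplit : blockVec a b (K *ᵥ wc) = blockVec a b (K *ᵥ wc - da) + blockVec 0 0 da := by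
    rw [blockVec_add, add_zero, add_zero, sub_add_cancel]
  rw [hsplit, mulVec_add, Jcl_sub_Rcl_mulVec_blockVec_zero_zero, ← hGd, add_sub_cancel_right,
    sub_mulVec, dotProduct_sub,
    dotProduct_mulVec_self_eq_zero_of_transpose_eq_neg (Jcl_transpose hJc1 hJuu),
    blockVec_dotProduct_Rcl_mulVec, mulVec_sub, hKinv]
  have hb : 0 ≤ b ⬝ᵥ Ruu *ᵥ b := by simpa using hRuu.dotProduct_mulVec_nonneg b
  linarith

/-- along the closed-loop dynamics, the Lyapunov candidate satisfies
`Ẇ ≤ −‖∇_{w_a}H_cl‖²_{R_c2} − ‖∇_{w_a}H_cl + K(w_c − w̄_c)‖²_{R_c1}`.  Here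
`a = ∇_{w_a}H_cl(w)`, `b = ∇_{w_u}H_cl(w)` and `K w_c` are the blocks of
`∇H_cl(w)`, and `∇W = ∇H_cl − (0,0,d̄_a)`, `w̄_c = K⁻¹ d̄_a`. -/
theorem stmt9 {m s : ℕ} (Jc1 Rc1 Rc2 K : Matrix (Fin m) (Fin m) ℝ)
    (Juu Ruu : Matrix (Fin s) (Fin s) ℝ) (Jau Rau : Matrix (Fin m) (Fin s) ℝ)
    (hJc1 : Jc1ᵀ = -Jc1) (hRc1 : Rc1.PosDef) (hRc2 : Rc2.PosSemidef)
    (hJuu : Juuᵀ = -Juu) (hRuu : Ruu.PosSemidef) (hK : K.PosDef)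
    (Gd : Matrix (Fin m) (Fin m) ℝ) (hGd : Gd = Jc1 - Rc1) (da : Fin m → ℝ) :
    ∀ (a : Fin m → ℝ) (b : Fin s → ℝ) (wc : Fin m → ℝ),
      blockVec a b (K.mulVec wc - da) ⬝ᵥ
        ((Jcl Jc1 Juu Jau Rau - Rcl Rc1 Rc2 Ruu).mulVec (blockVec a b (K.mulVec wc))
          - blockVec (Gd.mulVec da) 0 (Gd.mulVec da)) ≤
      -(a ⬝ᵥ Rc2.mulVec a)
        - ((a + K.mulVec (wc - K⁻¹.mulVec da)) ⬝ᵥ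
            Rc1.mulVec (a + K.mulVec (wc - K⁻¹.mulVec da))) :=
  stmt9_general Jc1 Rc1 Rc2 K Juu Ruu Jau Rau hJc1 hJuu hRuu hK Gd hGd da
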